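/- arXiv:1612.07838 — 9 statements merged into one kernel-verified Lean document; each statement's English description precedes it below -/
import Mathlib

section
/- Let A be an m×n real matrix with nonzero rows, b ∈ ℝ^m with Ax = b consistent, and x* the solution nearest to x^k. Suppose i_k achieves the maximum residual: |a_{i_k}ᵀx^k - b_{i_k}| = max_i |a_iᵀx^k - b_i|, and set x^{k+1} = x^k + ((b_{i_k} - a_{i_k}ᵀx^k)/‖a_{i_k}‖²)·a_{i_k}. Then ‖x^{k+1} - x*‖² ≤ (1 - σ(A,∞)²/‖a_{i_k}‖²)·‖x^k - x*‖², where σ(A,∞) is the largest constant with σ(A,∞)·‖x - x*‖ ≤ ‖A(x - x*)‖_∞ for all x. -/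
open scoped RealInnerProductSpace BigOperators

theorem kaczmarz_MR_tight_rate {m n : ℕ}
    (a : Fin m → EuclideanSpace ℝ (Fin n)) (b : Fin m → ℝ)
    (ha : ∀ i, a i ≠ 0) (xk xstar : EuclideanSpace ℝ (Fin n))
    (hsol : ∀ i, ⟪a i, xstar⟫ = b i)
    (hnear : ∀ y, (∀ i, ⟪a i, y⟫ = b i) → ‖xk - xstar‖ ≤ ‖xk - y‖)
    (σ : ℝ) (hσ0 : 0 ≤ σ)
    (hσ : ∀ x xs : EuclideanSpace ℝ (Fin n), (∀ i, ⟪a i, xs⟫ = b i) →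
      (∀ y, (∀ i, ⟪a i, y⟫ = b i) → ‖x - xs‖ ≤ ‖x - y‖) →
      σ * ‖x - xs‖ ≤ ⨆ i, |⟪a i, x - xs⟫|)
    (ik : Fin m)
    (hik : |⟪a ik, xk⟫ - b ik| = ⨆ i, |⟪a i, xk⟫ - b i|) :
    ‖(xk + ((b ik - ⟪a ik, xk⟫) / ‖a ik‖ ^ 2) • a ik) - xstar‖ ^ 2
      ≤ (1 - σ ^ 2 / ‖a ik‖ ^ 2) * ‖xk - xstar‖ ^ 2 := by
  set d : EuclideanSpace ℝ (Fin n) := xk - xstar with hd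
  set c : ℝ := ⟪a ik, d⟫ with hc
  have hna : (0:ℝ) < ‖a ik‖ := norm_pos_iff.mpr (ha ik)
  have hna2 : (0:ℝ) < ‖a ik‖ ^ 2 := by positivity
  have hcb : b ik - ⟪a ik, xk⟫ = -c := by
    rw [hc, hd, inner_sub_right, hsol ik]; ring
  -- rewrite the step as d - (c/‖a‖²)•a
  have hstep : (xk + ((b ik - ⟪a ik, xk⟫) / ‖a ik‖ ^ 2) • a ik) - xstar
      = d - (c / ‖a ik‖ ^ 2) • a ik := by
    rw [hcb, hd]
    module
  rw [hstep]
  -- expand the norm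
  have hexp : ‖d - (c / ‖a ik‖ ^ 2) • a ik‖ ^ 2 = ‖d‖ ^ 2 - c ^ 2 / ‖a ik‖ ^ 2 := by
    rw [norm_sub_sq_real, real_inner_smul_right, norm_smul, real_inner_comm, ← hc]
    rw [mul_pow, Real.norm_eq_abs, sq_abs]
    field_simp
    ring
  rw [hexp]
  -- key inequality: σ² ‖d‖² ≤ c²
  have hsup : (⨆ i, |⟪a i, d⟫|) = |c| := by
    simp only [hc, hd, inner_sub_right, hsol]
    exact hik.symm
  have h1 : σ * ‖d‖ ≤ |c| := by
    have := hσ xk xstar hsol hnear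
    rw [← hd, hsup] at this
    exact this
  have h2 : σ ^ 2 * ‖d‖ ^ 2 ≤ c ^ 2 := by
    have := mul_self_le_mul_self (by positivity) h1
    calc σ ^ 2 * ‖d‖ ^ 2 = (σ * ‖d‖) * (σ * ‖d‖) := by ring
      _ ≤ |c| * |c| := this
      _ = c ^ 2 := by rw [← sq_abs]; ring
  have : σ ^ 2 / ‖a ik‖ ^ 2 * ‖d‖ ^ 2 ≤ c ^ 2 / ‖a ik‖ ^ 2 := by
    rw [div_mul_eq_mul_div, div_le_div_iff_of_pos_right hna2]
    exact h2
  nlinarith [this]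
end

section
/- Let A be an m×n real matrix with nonzero rows, Ax = b consistent, and x* the solution nearest to x^k. Suppose i_k achieves the maximum normalized residual: |a_{i_k}ᵀx^k - b_{i_k}|/‖a_{i_k}‖ = max_i |a_iᵀx^k - b_i|/‖a_i‖, and set x^{k+1} = x^k + ((b_{i_k} - a_{i_k}ᵀx^k)/‖a_{i_k}‖²)·a_{i_k}. Then ‖x^{k+1} - x*‖² ≤ (1 - σ(Ā,∞)²)·‖x^k - x*‖², where Ā = D⁻¹A with D = diag(‖a_1‖,…,‖a_m‖), and σ(Ā,∞) is the largest constant with σ(Ā,∞)·‖x - x*‖ ≤ ‖Ā(x - x*)‖_∞ for all x. -/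
open scoped RealInnerProductSpace BigOperators

theorem kaczmarz_MD_rate {m n : ℕ}
    (a : Fin m → EuclideanSpace ℝ (Fin n)) (b : Fin m → ℝ)
    (ha : ∀ i, a i ≠ 0) (xk xstar : EuclideanSpace ℝ (Fin n))
    (hsol : ∀ i, ⟪a i, xstar⟫ = b i)
    (hnear : ∀ y, (∀ i, ⟪a i, y⟫ = b i) → ‖xk - xstar‖ ≤ ‖xk - y‖)
    (σ : ℝ) (hσ0 : 0 ≤ σ)
    (hσ : ∀ x xs : EuclideanSpace ℝ (Fin n), (∀ i, ⟪a i, xs⟫ = b i) →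
      (∀ y, (∀ i, ⟪a i, y⟫ = b i) → ‖x - xs‖ ≤ ‖x - y‖) →
      σ * ‖x - xs‖ ≤ ⨆ i, |⟪a i, x - xs⟫| / ‖a i‖)
    (ik : Fin m)
    (hik : |⟪a ik, xk⟫ - b ik| / ‖a ik‖ = ⨆ i, |⟪a i, xk⟫ - b i| / ‖a i‖) :
    ‖(xk + ((b ik - ⟪a ik, xk⟫) / ‖a ik‖ ^ 2) • a ik) - xstar‖ ^ 2
      ≤ (1 - σ ^ 2) * ‖xk - xstar‖ ^ 2 := by
  set u := xk - xstar with hu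
  set v := a ik with hv
  have hvn : ‖v‖ ≠ 0 := norm_ne_zero_iff.mpr (ha ik)
  have hvpos : (0:ℝ) < ‖v‖ := (norm_pos_iff).mpr (ha ik)
  set r : ℝ := ⟪v, u⟫ with hr
  have hrb : ⟪a ik, xk⟫ - b ik = r := by
    rw [hr, hu, inner_sub_right, hsol]
  have key : (xk + ((b ik - ⟪a ik, xk⟫) / ‖a ik‖ ^ 2) • a ik) - xstar
      = u - (r / ‖v‖ ^ 2) • v := by
    have hb : b ik - ⟪a ik, xk⟫ = -r := by linarith
    rw [hb, hu, ← hv]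
    module
  -- norm computation
  have hnorm : ‖u - (r / ‖v‖ ^ 2) • v‖ ^ 2 = ‖u‖ ^ 2 - r ^ 2 / ‖v‖ ^ 2 := by
    have h1 : ‖u - (r / ‖v‖ ^ 2) • v‖ ^ 2
        = ‖u‖ ^ 2 - 2 * ⟪u, (r / ‖v‖ ^ 2) • v⟫ + ‖(r / ‖v‖ ^ 2) • v‖ ^ 2 :=
      norm_sub_sq_real u _
    rw [h1, real_inner_smul_right, norm_smul, mul_pow]
    have hvu : ⟪u, v⟫ = r := by rw [hr, real_inner_comm]
    rw [hvu]
    rw [Real.norm_eq_abs, sq_abs]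
    field_simp
    ring
  have hsup : σ * ‖u‖ ≤ |r| / ‖v‖ := by
    have h := hσ xk xstar hsol hnear
    have heq : (⨆ i, |⟪a i, xk - xstar⟫| / ‖a i‖)
        = ⨆ i, |⟪a i, xk⟫ - b i| / ‖a i‖ := by
      refine iSup_congr fun i => ?_
      rw [inner_sub_right, hsol]
    rw [heq, ← hik, hrb] at h
    exact h
  have hsq : σ ^ 2 * ‖u‖ ^ 2 ≤ r ^ 2 / ‖v‖ ^ 2 := by
    have h0 : 0 ≤ σ * ‖u‖ := mul_nonneg hσ0 (norm_nonneg _)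
    have := mul_self_le_mul_self h0 hsup
    have habs : |r| / ‖v‖ * (|r| / ‖v‖) = r ^ 2 / ‖v‖ ^ 2 := by
      rw [div_mul_div_comm, ← sq_abs r, sq, sq]
    nlinarith [this]
  rw [key, hnorm]
  nlinarith [hsq, sq_nonneg ‖u‖]
end

section
/- Let A be an m×n real matrix with nonzero rows, Ax = b consistent, x* the nearest solution to x^k, and ε ∈ [0,1). Suppose i_k satisfies |a_{i_k}ᵀx^k - b_{i_k}| ≥ (1-ε)·max_i |a_iᵀx^k - b_i|, and set x^{k+1} = x^k + ((b_{i_k} - a_{i_k}ᵀx^k)/‖a_{i_k}‖²)·a_{i_k}. Then ‖x^{k+1} - x*‖² ≤ (1 - (1-ε)²·σ(A,∞)²/‖a_{i_k}‖²)·‖x^k - x*‖², where σ(A,∞) satisfies σ(A,∞)·‖x - x*‖ ≤ ‖A(x - x*)‖_∞ for all x. -/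
open scoped RealInnerProductSpace BigOperators

theorem kaczmarz_MR_multiplicative_error {m n : ℕ}
    (a : Fin m → EuclideanSpace ℝ (Fin n)) (b : Fin m → ℝ)
    (ha : ∀ i, a i ≠ 0) (xk xstar : EuclideanSpace ℝ (Fin n))
    (hsol : ∀ i, ⟪a i, xstar⟫ = b i)
    (hnear : ∀ y, (∀ i, ⟪a i, y⟫ = b i) → ‖xk - xstar‖ ≤ ‖xk - y‖)
    (ε : ℝ) (hε0 : 0 ≤ ε) (hε1 : ε < 1)
    (σ : ℝ) (hσ0 : 0 ≤ σ)
    (hσ : ∀ x xs : EuclideanSpace ℝ (Fin n), (∀ i, ⟪a i, xs⟫ = b i) →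
      (∀ y, (∀ i, ⟪a i, y⟫ = b i) → ‖x - xs‖ ≤ ‖x - y‖) →
      σ * ‖x - xs‖ ≤ ⨆ i, |⟪a i, x - xs⟫|)
    (ik : Fin m)
    (hik : (1 - ε) * (⨆ i, |⟪a i, xk⟫ - b i|) ≤ |⟪a ik, xk⟫ - b ik|) :
    ‖(xk + ((b ik - ⟪a ik, xk⟫) / ‖a ik‖ ^ 2) • a ik) - xstar‖ ^ 2
      ≤ (1 - (1 - ε) ^ 2 * σ ^ 2 / ‖a ik‖ ^ 2) * ‖xk - xstar‖ ^ 2 := by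
  set u := xk - xstar with hu
  have hN : (0:ℝ) < ‖a ik‖ ^ 2 := pow_pos (norm_pos_iff.mpr (ha ik)) 2
  set r : ℝ := ⟪a ik, xk⟫ - b ik with hr
  have hru : r = ⟪a ik, u⟫ := by
    rw [hu, inner_sub_right, hsol ik]
  set c : ℝ := (b ik - ⟪a ik, xk⟫) / ‖a ik‖ ^ 2 with hc
  have hcr : c = -r / ‖a ik‖ ^ 2 := by rw [hc, hr]; ring_nf
  -- rewrite the iterate difference
  have hre : xk + c • a ik - xstar = u + c • a ik := by
    rw [hu]; abel
  have hnormsq : ‖u + c • a ik‖ ^ 2 = ‖u‖ ^ 2 - r ^ 2 / ‖a ik‖ ^ 2 := by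
    have huar : (⟪u, a ik⟫ : ℝ) = r := by rw [real_inner_comm]; exact hru.symm
    rw [norm_add_sq_real, real_inner_smul_right, norm_smul, Real.norm_eq_abs, mul_pow, sq_abs,
      huar, hcr]
    field_simp
    ring
  -- lower bound on r^2
  have hsup : σ * ‖u‖ ≤ ⨆ i, |⟪a i, xk⟫ - b i| := by
    have h := hσ xk xstar hsol hnear
    rw [← hu] at h
    convert h using 3 with i
    rw [hu, inner_sub_right, hsol i]
  have h1 : (1 - ε) * (σ * ‖u‖) ≤ |r| := by
    refine le_trans ?_ hik
    exact mul_le_mul_of_nonneg_left hsup (by linarith)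
  have h2 : ((1 - ε) * (σ * ‖u‖)) ^ 2 ≤ r ^ 2 := by
    rw [← sq_abs r]
    exact pow_le_pow_left₀ (mul_nonneg (by linarith) (by positivity)) h1 2
  have h3 : (1 - ε) ^ 2 * σ ^ 2 * ‖u‖ ^ 2 ≤ r ^ 2 := by nlinarith [h2]
  rw [hre, hnormsq]
  rw [sub_mul, one_mul]
  have : (1 - ε) ^ 2 * σ ^ 2 * ‖u‖ ^ 2 / ‖a ik‖ ^ 2 ≤ r ^ 2 / ‖a ik‖ ^ 2 := by
    gcongr
  have heq : (1 - ε) ^ 2 * σ ^ 2 / ‖a ik‖ ^ 2 * ‖u‖ ^ 2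
      = (1 - ε) ^ 2 * σ ^ 2 * ‖u‖ ^ 2 / ‖a ik‖ ^ 2 := by ring
  linarith [this]
end

section
/- Let A be an m×n real matrix with nonzero rows, Ax = b consistent, x* the nearest solution to x^k, and ε ≥ 0. Suppose i_k satisfies |a_{i_k}ᵀx^k - b_{i_k}|² ≥ max_i |a_iᵀx^k - b_i|² - ε, and set x^{k+1} = x^k + ((b_{i_k} - a_{i_k}ᵀx^k)/‖a_{i_k}‖²)·a_{i_k}. Then ‖x^{k+1} - x*‖² ≤ (1 - σ(A,∞)²/‖a_{i_k}‖²)·‖x^k - x*‖² + ε/‖a_{i_k}‖², where σ(A,∞) satisfies σ(A,∞)·‖x - x*‖ ≤ ‖A(x - x*)‖_∞ for all x. -/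
open scoped RealInnerProductSpace BigOperators

theorem kaczmarz_MR_additive_error {m n : ℕ}
    (a : Fin m → EuclideanSpace ℝ (Fin n)) (b : Fin m → ℝ)
    (ha : ∀ i, a i ≠ 0) (xk xstar : EuclideanSpace ℝ (Fin n))
    (hsol : ∀ i, ⟪a i, xstar⟫ = b i)
    (hnear : ∀ y, (∀ i, ⟪a i, y⟫ = b i) → ‖xk - xstar‖ ≤ ‖xk - y‖)
    (ε : ℝ) (hε0 : 0 ≤ ε)
    (σ : ℝ) (hσ0 : 0 ≤ σ)
    (hσ : ∀ x xs : EuclideanSpace ℝ (Fin n), (∀ i, ⟪a i, xs⟫ = b i) →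
      (∀ y, (∀ i, ⟪a i, y⟫ = b i) → ‖x - xs‖ ≤ ‖x - y‖) →
      σ * ‖x - xs‖ ≤ ⨆ i, |⟪a i, x - xs⟫|)
    (ik : Fin m)
    (hik : (⨆ i, (⟪a i, xk⟫ - b i) ^ 2) - ε ≤ (⟪a ik, xk⟫ - b ik) ^ 2) :
    ‖(xk + ((b ik - ⟪a ik, xk⟫) / ‖a ik‖ ^ 2) • a ik) - xstar‖ ^ 2
      ≤ (1 - σ ^ 2 / ‖a ik‖ ^ 2) * ‖xk - xstar‖ ^ 2 + ε / ‖a ik‖ ^ 2 := by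
  have hNpos : (0:ℝ) < ‖a ik‖ ^ 2 := pow_pos (norm_pos_iff.mpr (ha ik)) 2
  set N : ℝ := ‖a ik‖ ^ 2 with hN
  set r : ℝ := ⟪a ik, xk⟫ - b ik with hr
  set X : ℝ := ‖xk - xstar‖ ^ 2 with hX
  -- inner product of the residual with a ik
  have hinner : ⟪xk - xstar, a ik⟫ = r := by
    rw [real_inner_comm, inner_sub_right, hsol ik]
  -- key identity
  have key : ‖(xk + ((b ik - ⟪a ik, xk⟫) / ‖a ik‖ ^ 2) • a ik) - xstar‖ ^ 2
      = X - r ^ 2 / N := by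
    have hrw : (xk + ((b ik - ⟪a ik, xk⟫) / ‖a ik‖ ^ 2) • a ik) - xstar
        = (xk - xstar) + ((-r) / N) • a ik := by
      rw [hr, hN]; ring_nf; abel
    rw [hrw, norm_add_sq_real, inner_smul_right, hinner, norm_smul]
    have : ‖(-r) / N‖ ^ 2 = r ^ 2 / N ^ 2 := by
      rw [Real.norm_eq_abs, sq_abs, div_pow, neg_sq]
    rw [mul_pow, this, ← hN]
    field_simp
    ring
  have hne : Nonempty (Fin m) := ⟨ik⟩
  -- bound r^2 from below
  have hbdd : BddAbove (Set.range fun i => |⟪a i, xk - xstar⟫|) :=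
    Set.Finite.bddAbove (Set.finite_range _)
  have hbdd2 : BddAbove (Set.range fun i => (⟪a i, xk⟫ - b i) ^ 2) :=
    Set.Finite.bddAbove (Set.finite_range _)
  have hSnn : 0 ≤ ⨆ i, |⟪a i, xk - xstar⟫| :=
    le_trans (abs_nonneg _) (le_ciSup hbdd ik)
  have hsup : (⨆ i, |⟪a i, xk - xstar⟫|) ^ 2 ≤ ⨆ i, (⟪a i, xk⟫ - b i) ^ 2 := by
    obtain ⟨j, hj⟩ := Finite.exists_max fun i => |⟪a i, xk - xstar⟫|
    have h1 : (⨆ i, |⟪a i, xk - xstar⟫|) ≤ |⟪a j, xk - xstar⟫| := ciSup_le hj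
    have h2 : (⨆ i, |⟪a i, xk - xstar⟫|) ^ 2 ≤ |⟪a j, xk - xstar⟫| ^ 2 :=
      pow_le_pow_left₀ hSnn h1 2
    have h3 : |⟪a j, xk - xstar⟫| ^ 2 = (⟪a j, xk⟫ - b j) ^ 2 := by
      rw [sq_abs, inner_sub_right, hsol j]
    calc (⨆ i, |⟪a i, xk - xstar⟫|) ^ 2 ≤ (⟪a j, xk⟫ - b j) ^ 2 := by rw [← h3]; exact h2
      _ ≤ ⨆ i, (⟪a i, xk⟫ - b i) ^ 2 := le_ciSup hbdd2 j
  have hσX : σ * ‖xk - xstar‖ ≤ ⨆ i, |⟪a i, xk - xstar⟫| :=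
    hσ xk xstar hsol hnear
  have hmain : σ ^ 2 * X ≤ r ^ 2 + ε := by
    have h4 : (σ * ‖xk - xstar‖) ^ 2 ≤ (⨆ i, |⟪a i, xk - xstar⟫|) ^ 2 :=
      pow_le_pow_left₀ (by positivity) hσX 2
    have : σ ^ 2 * X = (σ * ‖xk - xstar‖) ^ 2 := by rw [hX]; ring
    rw [this]
    linarith [hsup, hik]
  rw [key]
  have expand : (1 - σ ^ 2 / N) * X + ε / N - (X - r ^ 2 / N)
      = (r ^ 2 + ε - σ ^ 2 * X) / N := by
    field_simp
    ring
  have hdiv : 0 ≤ (r ^ 2 + ε - σ ^ 2 * X) / N :=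
    div_nonneg (by linarith) hNpos.le
  linarith
end

section
/- Let A be an m×n real matrix with nonzero rows, Ax = b consistent, x* the nearest solution to x^k, and ε ≥ 0. Suppose i_k satisfies (a_{i_k}ᵀx^k - b_{i_k})²/‖a_{i_k}‖² ≥ max_i (a_iᵀx^k - b_i)²/‖a_i‖² - ε, and set x^{k+1} = x^k + ((b_{i_k} - a_{i_k}ᵀx^k)/‖a_{i_k}‖²)·a_{i_k}. Then ‖x^{k+1} - x*‖² ≤ (1 - σ(Ā,∞)²)·‖x^k - x*‖² + ε, where Ā is the row-normalized matrix and σ(Ā,∞) satisfies σ(Ā,∞)·‖x - x*‖ ≤ ‖Ā(x - x*)‖_∞ for all x. -/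
open scoped RealInnerProductSpace BigOperators

theorem kaczmarz_MD_additive_error {m n : ℕ}
    (a : Fin m → EuclideanSpace ℝ (Fin n)) (b : Fin m → ℝ)
    (ha : ∀ i, a i ≠ 0) (xk xstar : EuclideanSpace ℝ (Fin n))
    (hsol : ∀ i, ⟪a i, xstar⟫ = b i)
    (hnear : ∀ y, (∀ i, ⟪a i, y⟫ = b i) → ‖xk - xstar‖ ≤ ‖xk - y‖)
    (ε : ℝ) (hε0 : 0 ≤ ε)
    (σ : ℝ) (hσ0 : 0 ≤ σ)
    (hσ : ∀ x xs : EuclideanSpace ℝ (Fin n), (∀ i, ⟪a i, xs⟫ = b i) →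
      (∀ y, (∀ i, ⟪a i, y⟫ = b i) → ‖x - xs‖ ≤ ‖x - y‖) →
      σ * ‖x - xs‖ ≤ ⨆ i, |⟪a i, x - xs⟫| / ‖a i‖)
    (ik : Fin m)
    (hik : (⨆ i, (⟪a i, xk⟫ - b i) ^ 2 / ‖a i‖ ^ 2) - ε
      ≤ (⟪a ik, xk⟫ - b ik) ^ 2 / ‖a ik‖ ^ 2) :
    ‖(xk + ((b ik - ⟪a ik, xk⟫) / ‖a ik‖ ^ 2) • a ik) - xstar‖ ^ 2
      ≤ (1 - σ ^ 2) * ‖xk - xstar‖ ^ 2 + ε := by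
  set v := xk - xstar with hv
  set c : ℝ := (b ik - ⟪a ik, xk⟫) / ‖a ik‖ ^ 2 with hc
  have hna : (0:ℝ) < ‖a ik‖ ^ 2 := pow_pos (norm_pos_iff.mpr (ha ik)) 2
  have hinner : ∀ i, ⟪a i, v⟫ = ⟪a i, xk⟫ - b i := by
    intro i
    rw [hv, inner_sub_right, hsol i]
  -- rewrite the step vector
  have hstep : (xk + c • a ik) - xstar = v + c • a ik := by
    rw [hv]; abel
  set r : ℝ := ⟪a ik, xk⟫ - b ik with hr
  have hcr : c = -r / ‖a ik‖ ^ 2 := by rw [hc, hr]; ring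
  have hnorm : ‖(xk + c • a ik) - xstar‖ ^ 2 = ‖v‖ ^ 2 - r ^ 2 / ‖a ik‖ ^ 2 := by
    rw [hstep, norm_add_sq_real, real_inner_smul_right, norm_smul,
      real_inner_comm, hinner ik, ← hr]
    rw [Real.norm_eq_abs, mul_pow, sq_abs, hcr]
    have hne : ‖a ik‖ ^ 2 ≠ 0 := ne_of_gt hna
    field_simp
    ring
  rw [hnorm]
  -- sup bound
  set T : ℝ := ⨆ i, (⟪a i, xk⟫ - b i) ^ 2 / ‖a i‖ ^ 2 with hT
  have hTge : ∀ i, (⟪a i, xk⟫ - b i) ^ 2 / ‖a i‖ ^ 2 ≤ T := by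
    intro i
    exact le_ciSup (f := fun i => (⟪a i, xk⟫ - b i) ^ 2 / ‖a i‖ ^ 2)
      (Set.Finite.bddAbove (Set.finite_range _)) i
  have hT0 : 0 ≤ T := le_trans (by positivity) (hTge ik)
  have : Nonempty (Fin m) := ⟨ik⟩
  have hS : σ * ‖v‖ ≤ Real.sqrt T := by
    refine le_trans (hσ xk xstar hsol hnear) ?_
    refine ciSup_le fun i => ?_
    have h1 : (|⟪a i, v⟫| / ‖a i‖) ^ 2 = (⟪a i, xk⟫ - b i) ^ 2 / ‖a i‖ ^ 2 := by
      rw [div_pow, sq_abs, hinner i]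
    have h2 : |⟪a i, v⟫| / ‖a i‖ ≤ Real.sqrt T := by
      rw [← Real.sqrt_sq (by positivity : (0:ℝ) ≤ |⟪a i, v⟫| / ‖a i‖), h1]
      exact Real.sqrt_le_sqrt (hTge i)
    exact h2
  have hS2 : σ ^ 2 * ‖v‖ ^ 2 ≤ T := by
    have := mul_self_le_mul_self (by positivity) hS
    rw [Real.mul_self_sqrt hT0] at this
    nlinarith
  nlinarith [hik, hT0]
end

section
/- Let A = diag(λ_1,…,λ_m) be an m×m diagonal matrix with all λ_i > 0. Then inf over nonzero w ∈ ℝ^m of ‖Aw‖_∞²/‖w‖² equals (Σ_{i=1}^m 1/λ_i²)⁻¹. -/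
/-!
Since `|λᵢ wᵢ| ≤ ‖Aw‖_∞` for every `i`, summing `wᵢ² ≤ ‖Aw‖_∞² / λᵢ²` gives
`‖w‖² ≤ ‖Aw‖_∞² · ∑ᵢ λᵢ⁻²`. Equality holds at `w = A⁻¹ 𝟙`, whose image has all
coordinates equal to `1`.
-/

open scoped BigOperators

namespace DiagonalHoffman

variable {ι : Type*} [Fintype ι]

theorem norm_sq_le_sum_inv_sq_mul_iSup_sq {lam : ι → ℝ} (hlam : ∀ i, 0 < lam i)
    (w : EuclideanSpace ℝ ι) :
    ‖w‖ ^ 2 ≤ (∑ i, 1 / lam i ^ 2) * ⨆ i, (lam i * w i) ^ 2 := by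
  have hle : ∀ i, (lam i * w i) ^ 2 ≤ ⨆ j, (lam j * w j) ^ 2 :=
    le_ciSup (Set.finite_range _).bddAbove
  rw [EuclideanSpace.real_norm_sq_eq, Finset.sum_mul]
  refine Finset.sum_le_sum fun i _ => ?_
  have hlam_sq : 0 < lam i ^ 2 := pow_pos (hlam i) 2
  rw [one_div, inv_mul_eq_div, le_div_iff₀ hlam_sq, ← mul_pow, mul_comm]
  exact hle i

theorem iSup_sq_div_norm_sq_of_inv [Nonempty ι] {lam : ι → ℝ} (hlam : ∀ i, 0 < lam i) :
    (⨆ i, (lam i * (WithLp.toLp 2 fun j => (lam j)⁻¹ : EuclideanSpace ℝ ι) i) ^ 2) /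
        ‖(WithLp.toLp 2 fun j => (lam j)⁻¹ : EuclideanSpace ℝ ι)‖ ^ 2 =
      (∑ i, 1 / lam i ^ 2)⁻¹ := by
  simp [EuclideanSpace.real_norm_sq_eq, mul_inv_cancel₀ (hlam _).ne', inv_pow]

theorem iInf_iSup_sq_div_norm_sq {lam : ι → ℝ} (hlam : ∀ i, 0 < lam i) :
    (⨅ w : {w : EuclideanSpace ℝ ι // w ≠ 0}, (⨆ i, (lam i * (w : EuclideanSpace ℝ ι) i) ^ 2) /
        ‖(w : EuclideanSpace ℝ ι)‖ ^ 2) = (∑ i, 1 / lam i ^ 2)⁻¹ := by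
  cases isEmpty_or_nonempty ι with
  | inl hempty =>
    have : IsEmpty {w : EuclideanSpace ℝ ι // w ≠ 0} := ⟨fun w => w.2 (Subsingleton.elim _ _)⟩
    rw [Real.iInf_of_isEmpty, Finset.univ_eq_empty, Finset.sum_empty, inv_zero]
  | inr hne =>
    set w₀ : EuclideanSpace ℝ ι := WithLp.toLp 2 fun j => (lam j)⁻¹
    have hw₀ : w₀ ≠ 0 := by
      intro h
      obtain ⟨i⟩ := hne
      exact inv_ne_zero (hlam i).ne' (congrArg (· i) h)
    have hS : 0 < ∑ i, 1 / lam i ^ 2 :=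
      Finset.sum_pos (fun i _ => by have := hlam i; positivity) Finset.univ_nonempty
    apply le_antisymm
    · have hbdd : BddBelow (Set.range fun w : {w : EuclideanSpace ℝ ι // w ≠ 0} =>
          (⨆ i, (lam i * (w : EuclideanSpace ℝ ι) i) ^ 2) / ‖(w : EuclideanSpace ℝ ι)‖ ^ 2) := by
        refine ⟨0, ?_⟩
        rintro _ ⟨w, rfl⟩
        exact div_nonneg (Real.iSup_nonneg fun i => sq_nonneg _) (sq_nonneg _)
      exact (ciInf_le hbdd ⟨w₀, hw₀⟩).trans_eq (iSup_sq_div_norm_sq_of_inv hlam)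
    · have : Nonempty {w : EuclideanSpace ℝ ι // w ≠ 0} := ⟨⟨w₀, hw₀⟩⟩
      refine le_ciInf fun ⟨w, hw⟩ => ?_
      rw [le_div_iff₀ (by positivity), inv_mul_le_iff₀ hS]
      exact norm_sq_le_sum_inv_sq_mul_iSup_sq hlam w

end DiagonalHoffman

theorem diagonal_hoffman_infty_constant_general {m : ℕ}
    (lam : Fin m → ℝ) (hlam : ∀ i, 0 < lam i) :
    (⨅ w : {w : EuclideanSpace ℝ (Fin m) // w ≠ 0},
        (⨆ i, (lam i * (w : EuclideanSpace ℝ (Fin m)) i) ^ 2) / ‖(w : EuclideanSpace ℝ (Fin m))‖ ^ 2)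
      = (∑ i, 1 / (lam i) ^ 2)⁻¹ :=
  DiagonalHoffman.iInf_iSup_sq_div_norm_sq hlam

theorem diagonal_hoffman_infty_constant {m : ℕ} (hm : 0 < m)
    (lam : Fin m → ℝ) (hlam : ∀ i, 0 < lam i) :
    (⨅ w : {w : EuclideanSpace ℝ (Fin m) // w ≠ 0},
        (⨆ i, (lam i * (w : EuclideanSpace ℝ (Fin m)) i) ^ 2) / ‖(w : EuclideanSpace ℝ (Fin m))‖ ^ 2)
      = (∑ i, 1 / (lam i) ^ 2)⁻¹ :=
  diagonal_hoffman_infty_constant_general lam hlam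
end

section
/- Let A be an m×n real matrix with nonzero rows a_1ᵀ,…,a_mᵀ such that Ax = b is consistent, and let x* be the solution nearest x^k. If i is chosen uniformly at random from {1,…,m} and x^{k+1} = x^k + ((b_i - a_iᵀx^k)/‖a_i‖²)·a_i, then E[‖x^{k+1} - x*‖²] ≤ (1 - σ(Ā,2)²/m)·‖x^k - x*‖², where Ā = D⁻¹A is the row-normalized matrix and σ(Ā,2) is the largest constant with σ(Ā,2)·‖x - x*‖ ≤ ‖Ā(x - x*)‖₂ for all x. -/
open scoped RealInnerProductSpace BigOperators

theorem kaczmarz_uniform_tight_rate {m n : ℕ} (hm : 0 < m)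
    (a : Fin m → EuclideanSpace ℝ (Fin n)) (b : Fin m → ℝ)
    (ha : ∀ i, a i ≠ 0) (xk xstar : EuclideanSpace ℝ (Fin n))
    (hsol : ∀ i, ⟪a i, xstar⟫ = b i)
    (hnear : ∀ y, (∀ i, ⟪a i, y⟫ = b i) → ‖xk - xstar‖ ≤ ‖xk - y‖)
    (σ : ℝ) (hσ0 : 0 ≤ σ)
    (hσ : ∀ x xs : EuclideanSpace ℝ (Fin n), (∀ i, ⟪a i, xs⟫ = b i) →
      (∀ y, (∀ i, ⟪a i, y⟫ = b i) → ‖x - xs‖ ≤ ‖x - y‖) →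
      σ * ‖x - xs‖ ≤ Real.sqrt (∑ i, (⟪a i, x - xs⟫ / ‖a i‖) ^ 2)) :
    (1 / m) * ∑ i, ‖(xk + ((b i - ⟪a i, xk⟫) / ‖a i‖ ^ 2) • a i) - xstar‖ ^ 2
      ≤ (1 - σ ^ 2 / m) * ‖xk - xstar‖ ^ 2 := by
  set e := xk - xstar with he
  have hterm : ∀ i, ‖(xk + ((b i - ⟪a i, xk⟫) / ‖a i‖ ^ 2) • a i) - xstar‖ ^ 2
      = ‖e‖ ^ 2 - (⟪a i, e⟫ / ‖a i‖) ^ 2 := by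
    intro i
    have hai : ‖a i‖ ≠ 0 := norm_ne_zero_iff.mpr (ha i)
    have hb : b i - ⟪a i, xk⟫ = -⟪a i, e⟫ := by
      rw [he, inner_sub_right, hsol i]; ring
    have hrw : (xk + ((b i - ⟪a i, xk⟫) / ‖a i‖ ^ 2) • a i) - xstar
        = e - (⟪a i, e⟫ / ‖a i‖ ^ 2) • a i := by
      rw [hb, he]
      module
    rw [hrw, norm_sub_sq_real, inner_smul_right, norm_smul, real_inner_comm]
    rw [mul_pow, Real.norm_eq_abs, sq_abs]
    field_simp
    ring
  have hsum : ∑ i, ‖(xk + ((b i - ⟪a i, xk⟫) / ‖a i‖ ^ 2) • a i) - xstar‖ ^ 2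
      = m * ‖e‖ ^ 2 - ∑ i, (⟪a i, e⟫ / ‖a i‖) ^ 2 := by
    rw [Finset.sum_congr rfl fun i _ => hterm i, Finset.sum_sub_distrib,
      Finset.sum_const, Finset.card_univ, Fintype.card_fin, nsmul_eq_mul]
  have hσ2 : σ ^ 2 * ‖e‖ ^ 2 ≤ ∑ i, (⟪a i, e⟫ / ‖a i‖) ^ 2 := by
    have h1 := hσ xk xstar hsol hnear
    have hnn : (0:ℝ) ≤ ∑ i, (⟪a i, e⟫ / ‖a i‖) ^ 2 :=
      Finset.sum_nonneg fun i _ => sq_nonneg _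
    have := mul_self_le_mul_self (by positivity) h1
    calc σ ^ 2 * ‖e‖ ^ 2 = (σ * ‖e‖) * (σ * ‖e‖) := by ring
      _ ≤ Real.sqrt (∑ i, (⟪a i, e⟫ / ‖a i‖) ^ 2) *
          Real.sqrt (∑ i, (⟪a i, e⟫ / ‖a i‖) ^ 2) := this
      _ = ∑ i, (⟪a i, e⟫ / ‖a i‖) ^ 2 := Real.mul_self_sqrt hnn
  rw [hsum]
  have hm' : (0:ℝ) < m := by exact_mod_cast hm
  rw [one_div, inv_mul_le_iff₀ hm']
  have hmne : (m:ℝ) ≠ 0 := ne_of_gt hm'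
  have hrhs : (m:ℝ) * ((1 - σ ^ 2 / m) * ‖e‖ ^ 2) = m * ‖e‖ ^ 2 - σ ^ 2 * ‖e‖ ^ 2 := by
    field_simp
  rw [hrhs]
  linarith
end

section
/- Let A be an m×n real matrix with nonzero rows a_1ᵀ,…,a_mᵀ such that Ax = b is consistent, and let x* be the solution nearest x^k. If row i is chosen with probability ‖a_i‖²/‖A‖_F² and x^{k+1} = x^k + ((b_i - a_iᵀx^k)/‖a_i‖²)·a_i, then E[‖x^{k+1} - x*‖²] ≤ (1 - σ(A,2)²/‖A‖_F²)·‖x^k - x*‖², where σ(A,2) is the largest constant with σ(A,2)·‖x - x*‖ ≤ ‖A(x - x*)‖₂ for all x. -/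
/-!
Write `e = x - x*`. Since `x*` solves the `i`-th equation, the Kaczmarz step from `x` moves `e` to
its orthogonal projection `e'` onto `a_iᗮ`, so by Pythagoras `‖a_i‖² ‖e'‖² = ‖a_i‖² ‖e‖² - ⟪a_i, e⟫²`.
Averaging with weights `‖a_i‖² / ‖A‖_F²` gives `‖e‖² - ‖A e‖² / ‖A‖_F²`, and the definition of
`σ(A,2)` bounds `‖A e‖²` below by `σ² ‖e‖²`.
-/

open scoped RealInnerProductSpace BigOperators

section Kaczmarz

variable {E : Type*} [NormedAddCommGroup E] [InnerProductSpace ℝ E]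

/-- Also true for `a = 0`, where the projection coefficient is `0 / 0 = 0`. -/
theorem sq_norm_mul_sq_norm_sub_inner_div_smul (a e : E) :
    ‖a‖ ^ 2 * ‖e - (⟪a, e⟫ / ‖a‖ ^ 2) • a‖ ^ 2 = ‖a‖ ^ 2 * ‖e‖ ^ 2 - ⟪a, e⟫ ^ 2 := by
  rcases eq_or_ne a 0 with rfl | ha
  · simp
  have ha' : ‖a‖ ≠ 0 := norm_ne_zero_iff.mpr ha
  rw [norm_sub_sq_real, inner_smul_right, norm_smul, mul_pow, Real.norm_eq_abs, sq_abs,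
    real_inner_comm e a]
  field_simp
  ring

theorem kaczmarz_step_sub_of_inner_eq {a x xs : E} {β : ℝ} (hxs : ⟪a, xs⟫ = β) :
    x + ((β - ⟪a, x⟫) / ‖a‖ ^ 2) • a - xs = (x - xs) - (⟪a, x - xs⟫ / ‖a‖ ^ 2) • a := by
  rw [← hxs, inner_sub_right, ← neg_sub ⟪a, x⟫, neg_div, neg_smul]
  abel

theorem kaczmarz_expected_sq_dist_le {ι : Type*} [Fintype ι] (a : ι → E) (b : ι → ℝ)
    (x xs : E) (hxs : ∀ i, ⟪a i, xs⟫ = b i) (σ : ℝ)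
    (hσ : σ ^ 2 * ‖x - xs‖ ^ 2 ≤ ∑ i, ⟪a i, x - xs⟫ ^ 2) :
    ∑ i, (‖a i‖ ^ 2 / ∑ j, ‖a j‖ ^ 2) * ‖x + ((b i - ⟪a i, x⟫) / ‖a i‖ ^ 2) • a i - xs‖ ^ 2
      ≤ (1 - σ ^ 2 / ∑ j, ‖a j‖ ^ 2) * ‖x - xs‖ ^ 2 := by
  set F := ∑ j, ‖a j‖ ^ 2
  set e := x - xs
  have hmean : ∑ i, (‖a i‖ ^ 2 / F) * ‖x + ((b i - ⟪a i, x⟫) / ‖a i‖ ^ 2) • a i - xs‖ ^ 2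
      = (F * ‖e‖ ^ 2 - ∑ i, ⟪a i, e⟫ ^ 2) / F := by
    simp_rw [kaczmarz_step_sub_of_inner_eq (hxs _), div_mul_eq_mul_div, ← Finset.sum_div,
      sq_norm_mul_sq_norm_sub_inner_div_smul, Finset.sum_sub_distrib, ← Finset.sum_mul]
    rfl
  rw [hmean]
  rcases (show 0 ≤ F by positivity).eq_or_lt with hF | hF
  · -- `F = 0`: both divisions by `F` give the junk value `0`, leaving `0 ≤ ‖e‖ ^ 2`.
    simp [← hF]
  calc (F * ‖e‖ ^ 2 - ∑ i, ⟪a i, e⟫ ^ 2) / F ≤ (F * ‖e‖ ^ 2 - σ ^ 2 * ‖e‖ ^ 2) / F := by gcongr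
    _ = (1 - σ ^ 2 / F) * ‖e‖ ^ 2 := by field_simp

end Kaczmarz

theorem kaczmarz_nonuniform_rate_general {m n : ℕ}
    (a : Fin m → EuclideanSpace ℝ (Fin n)) (b : Fin m → ℝ)
    (xk xstar : EuclideanSpace ℝ (Fin n))
    (hsol : ∀ i, ⟪a i, xstar⟫ = b i)
    (hnear : ∀ y, (∀ i, ⟪a i, y⟫ = b i) → ‖xk - xstar‖ ≤ ‖xk - y‖)
    (σ : ℝ) (hσ0 : 0 ≤ σ)
    (hσ : ∀ x xs : EuclideanSpace ℝ (Fin n), (∀ i, ⟪a i, xs⟫ = b i) →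
      (∀ y, (∀ i, ⟪a i, y⟫ = b i) → ‖x - xs‖ ≤ ‖x - y‖) →
      σ * ‖x - xs‖ ≤ Real.sqrt (∑ i, (⟪a i, x - xs⟫) ^ 2)) :
    ∑ i, (‖a i‖ ^ 2 / ∑ j, ‖a j‖ ^ 2) *
        ‖(xk + ((b i - ⟪a i, xk⟫) / ‖a i‖ ^ 2) • a i) - xstar‖ ^ 2
      ≤ (1 - σ ^ 2 / ∑ j, ‖a j‖ ^ 2) * ‖xk - xstar‖ ^ 2 := by
  have hbound : σ ^ 2 * ‖xk - xstar‖ ^ 2 ≤ ∑ i, ⟪a i, xk - xstar⟫ ^ 2 := by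
    rw [← mul_pow, ← Real.le_sqrt (by positivity) (by positivity)]
    exact hσ xk xstar hsol hnear
  exact kaczmarz_expected_sq_dist_le a b xk xstar hsol σ hbound

theorem kaczmarz_nonuniform_rate {m n : ℕ} (hm : 0 < m)
    (a : Fin m → EuclideanSpace ℝ (Fin n)) (b : Fin m → ℝ)
    (ha : ∀ i, a i ≠ 0) (xk xstar : EuclideanSpace ℝ (Fin n))
    (hsol : ∀ i, ⟪a i, xstar⟫ = b i)
    (hnear : ∀ y, (∀ i, ⟪a i, y⟫ = b i) → ‖xk - xstar‖ ≤ ‖xk - y‖)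
    (σ : ℝ) (hσ0 : 0 ≤ σ)
    (hσ : ∀ x xs : EuclideanSpace ℝ (Fin n), (∀ i, ⟪a i, xs⟫ = b i) →
      (∀ y, (∀ i, ⟪a i, y⟫ = b i) → ‖x - xs‖ ≤ ‖x - y‖) →
      σ * ‖x - xs‖ ≤ Real.sqrt (∑ i, (⟪a i, x - xs⟫) ^ 2)) :
    ∑ i, (‖a i‖ ^ 2 / ∑ j, ‖a j‖ ^ 2) *
        ‖(xk + ((b i - ⟪a i, xk⟫) / ‖a i‖ ^ 2) • a i) - xstar‖ ^ 2
      ≤ (1 - σ ^ 2 / ∑ j, ‖a j‖ ^ 2) * ‖xk - xstar‖ ^ 2 :=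
  kaczmarz_nonuniform_rate_general a b xk xstar hsol hnear σ hσ0 hσ
end

section
/- Let A be an m×n real matrix with nonzero rows, Ā its row-normalized version, and S = {x : Ax = b} nonempty with S ≠ ℝ^n. Define σ(Ā,∞) = inf over x ∉ S of ‖Ā(x - x*)‖_∞/‖x - x*‖ where x* is the projection of x onto S. Then σ(Ā,∞) ≥ max{σ(Ā,2)/√m, σ(A,2)/‖A‖_F, σ(A,∞)/‖A‖_{∞,2}} and σ(Ā,∞) ≤ σ(Ā,2), where σ(·,2) and σ(·,∞) are the Hoffman constants with respect to the Euclidean and max norms respectively, ‖A‖_F is the Frobenius norm, and ‖A‖_{∞,2} is the maximum row norm. -/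
/-!
All four inequalities already hold pointwise, before taking infima: for every `x`, with
`d = x - P x`, each numerator on the left is bounded by the corresponding constant times the
maximum-distance numerator `s = maxᵢ |⟪aᵢ, d⟫| / ‖aᵢ‖`, and `s` is bounded by the Euclidean norm
of the normalized residual. A pointwise bound `F ≤ c G` between numerators passes to the infima
of the quotients `F / ‖d‖` and `G / ‖d‖`.
-/

open scoped RealInnerProductSpace BigOperators

section FiniteFamilies

variable {ι : Type*} [Fintype ι]

theorem sqrt_sum_sq_le_sqrt_card_mul_iSup_abs (v : ι → ℝ) :
    √(∑ i, v i ^ 2) ≤ √(Fintype.card ι) * ⨆ i, |v i| := by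
  have hsup : ∀ i, |v i| ≤ ⨆ j, |v j| := le_ciSup (Finite.bddAbove_range _)
  rw [← Real.sqrt_sq (Real.iSup_nonneg fun i => abs_nonneg (v i)), ← Real.sqrt_mul (by positivity)]
  refine Real.sqrt_le_sqrt ?_
  calc ∑ i, v i ^ 2 ≤ ∑ _i : ι, (⨆ j, |v j|) ^ 2 :=
        Finset.sum_le_sum fun i _ => sq_abs (v i) ▸ pow_le_pow_left₀ (abs_nonneg _) (hsup i) 2
    _ = Fintype.card ι * (⨆ j, |v j|) ^ 2 := by
        rw [Finset.sum_const, Finset.card_univ, nsmul_eq_mul]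

theorem iSup_abs_le_sqrt_sum_sq (v : ι → ℝ) : ⨆ i, |v i| ≤ √(∑ i, v i ^ 2) :=
  Real.iSup_le (fun i => Real.abs_le_sqrt <|
    Finset.single_le_sum (f := fun j => v j ^ 2) (fun _ _ => sq_nonneg _) (Finset.mem_univ i))
    (Real.sqrt_nonneg _)

variable {u w : ι → ℝ}

theorem abs_le_mul_iSup_abs_div (hw : ∀ i, 0 < w i) (i : ι) :
    |u i| ≤ w i * ⨆ j, |u j| / w j := by
  rw [← div_le_iff₀' (hw i)]
  exact le_ciSup (f := fun j => |u j| / w j) (Finite.bddAbove_range _) i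

theorem sqrt_sum_sq_le_sqrt_sum_sq_mul_iSup_abs_div (hw : ∀ i, 0 < w i) :
    √(∑ i, u i ^ 2) ≤ √(∑ i, w i ^ 2) * ⨆ i, |u i| / w i := by
  have hs : 0 ≤ ⨆ i, |u i| / w i := Real.iSup_nonneg fun i => div_nonneg (abs_nonneg _) (hw i).le
  rw [← Real.sqrt_sq hs, ← Real.sqrt_mul (by positivity), Finset.sum_mul]
  refine Real.sqrt_le_sqrt (Finset.sum_le_sum fun i _ => ?_)
  rw [← mul_pow, ← sq_abs]
  exact pow_le_pow_left₀ (abs_nonneg _) (abs_le_mul_iSup_abs_div hw i) 2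

theorem iSup_abs_le_iSup_mul_iSup_abs_div (hw : ∀ i, 0 < w i) :
    ⨆ i, |u i| ≤ (⨆ i, w i) * ⨆ i, |u i| / w i := by
  have hs : 0 ≤ ⨆ i, |u i| / w i := Real.iSup_nonneg fun i => div_nonneg (abs_nonneg _) (hw i).le
  refine Real.iSup_le (fun i => (abs_le_mul_iSup_abs_div hw i).trans ?_)
    (mul_nonneg (Real.iSup_nonneg fun i => (hw i).le) hs)
  exact mul_le_mul_of_nonneg_right (le_ciSup (Finite.bddAbove_range _) i) hs

end FiniteFamilies

theorem sInf_div_le_sInf_of_le_mul {α : Type*} (Q : α → Prop) {F G d : α → ℝ} {c : ℝ}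
    (hc : 0 ≤ c) (hF : ∀ x, 0 ≤ F x) (hG : ∀ x, 0 ≤ G x) (hd : ∀ x, 0 ≤ d x)
    (hFG : ∀ x, F x ≤ c * G x) :
    sInf {r : ℝ | ∃ x, Q x ∧ r = F x / d x} / c ≤ sInf {r : ℝ | ∃ x, Q x ∧ r = G x / d x} := by
  rcases hc.eq_or_lt with rfl | hc
  · rw [div_zero]
    exact Real.sInf_nonneg fun r ⟨x, _, hr⟩ => hr ▸ div_nonneg (hG x) (hd x)
  rcases Set.eq_empty_or_nonempty {r : ℝ | ∃ x, Q x ∧ r = G x / d x} with hempty | hne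
  · -- both sets are empty, and `sInf ∅ = 0`
    have hQ : ∀ x, ¬ Q x := fun x hx => hempty.subset ⟨x, hx, rfl⟩
    simp [hQ]
  refine le_csInf hne fun r ⟨x, hx, hr⟩ => ?_
  rw [div_le_iff₀ hc, hr, div_mul_eq_mul_div, mul_comm]
  calc sInf {r : ℝ | ∃ x, Q x ∧ r = F x / d x} ≤ F x / d x :=
        csInf_le ⟨0, fun r ⟨y, _, hr⟩ => hr ▸ div_nonneg (hF y) (hd y)⟩ ⟨x, hx, rfl⟩
    _ ≤ c * G x / d x := div_le_div_of_nonneg_right (hFG x) (hd x)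

theorem MD_hoffman_constant_sandwich_general {m n : ℕ}
    (a : Fin m → EuclideanSpace ℝ (Fin n)) (ha : ∀ i, a i ≠ 0) (b : Fin m → ℝ)
    (P : EuclideanSpace ℝ (Fin n) → EuclideanSpace ℝ (Fin n)) :
    max (max
        (sInf {r : ℝ | ∃ x, (¬ ∀ i, ⟪a i, x⟫ = b i) ∧
          r = Real.sqrt (∑ i, (⟪a i, x - P x⟫ / ‖a i‖) ^ 2) / ‖x - P x‖} / Real.sqrt m)
        (sInf {r : ℝ | ∃ x, (¬ ∀ i, ⟪a i, x⟫ = b i) ∧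
          r = Real.sqrt (∑ i, (⟪a i, x - P x⟫) ^ 2) / ‖x - P x‖} /
            Real.sqrt (∑ i, ‖a i‖ ^ 2)))
        (sInf {r : ℝ | ∃ x, (¬ ∀ i, ⟪a i, x⟫ = b i) ∧
          r = (⨆ i, |⟪a i, x - P x⟫|) / ‖x - P x‖} / (⨆ i, ‖a i‖))
      ≤ sInf {r : ℝ | ∃ x, (¬ ∀ i, ⟪a i, x⟫ = b i) ∧
          r = (⨆ i, |⟪a i, x - P x⟫| / ‖a i‖) / ‖x - P x‖} ∧
    sInf {r : ℝ | ∃ x, (¬ ∀ i, ⟪a i, x⟫ = b i) ∧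
          r = (⨆ i, |⟪a i, x - P x⟫| / ‖a i‖) / ‖x - P x‖}
      ≤ sInf {r : ℝ | ∃ x, (¬ ∀ i, ⟪a i, x⟫ = b i) ∧
          r = Real.sqrt (∑ i, (⟪a i, x - P x⟫ / ‖a i‖) ^ 2) / ‖x - P x‖} := by
  have hw : ∀ i, 0 < ‖a i‖ := fun i => norm_pos_iff.mpr (ha i)
  have hd : ∀ x : EuclideanSpace ℝ (Fin n), 0 ≤ ‖x - P x‖ := fun _ => norm_nonneg _
  have hMD : ∀ x : EuclideanSpace ℝ (Fin n), 0 ≤ ⨆ i, |⟪a i, x - P x⟫| / ‖a i‖ :=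
    fun _ => Real.iSup_nonneg fun i => div_nonneg (abs_nonneg _) (hw i).le
  have hnormalized : ∀ x : EuclideanSpace ℝ (Fin n), ∀ i,
      |⟪a i, x - P x⟫| / ‖a i‖ = |⟪a i, x - P x⟫ / ‖a i‖| := fun _ i => by
    rw [abs_div, abs_norm]
  refine ⟨max_le (max_le ?_ ?_) ?_, ?_⟩
  · refine sInf_div_le_sInf_of_le_mul _ (Real.sqrt_nonneg _) (fun _ => Real.sqrt_nonneg _) hMD hd
      fun x => ?_
    simpa only [hnormalized, Fintype.card_fin] using
      sqrt_sum_sq_le_sqrt_card_mul_iSup_abs fun i => ⟪a i, x - P x⟫ / ‖a i‖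
  · exact sInf_div_le_sInf_of_le_mul _ (Real.sqrt_nonneg _) (fun _ => Real.sqrt_nonneg _) hMD hd
      fun _ => sqrt_sum_sq_le_sqrt_sum_sq_mul_iSup_abs_div hw
  · exact sInf_div_le_sInf_of_le_mul _ (Real.iSup_nonneg fun i => (hw i).le)
      (fun _ => Real.iSup_nonneg fun _ => abs_nonneg _) hMD hd
      fun _ => iSup_abs_le_iSup_mul_iSup_abs_div hw
  · simpa only [div_one] using sInf_div_le_sInf_of_le_mul _ zero_le_one hMD
      (fun _ => Real.sqrt_nonneg _) hd fun x => by
        simpa only [one_mul, hnormalized] using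
          iSup_abs_le_sqrt_sum_sq fun i => ⟪a i, x - P x⟫ / ‖a i‖

theorem MD_hoffman_constant_sandwich {m n : ℕ}
    (a : Fin m → EuclideanSpace ℝ (Fin n)) (ha : ∀ i, a i ≠ 0) (b : Fin m → ℝ)
    (P : EuclideanSpace ℝ (Fin n) → EuclideanSpace ℝ (Fin n))
    (hS : {x : EuclideanSpace ℝ (Fin n) | ∀ i, ⟪a i, x⟫ = b i}.Nonempty)
    (hSne : {x : EuclideanSpace ℝ (Fin n) | ∀ i, ⟪a i, x⟫ = b i} ≠ Set.univ)
    (hP : ∀ x, (∀ i, ⟪a i, P x⟫ = b i) ∧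
      ∀ y, (∀ i, ⟪a i, y⟫ = b i) → ‖x - P x‖ ≤ ‖x - y‖) :
    max (max
        (sInf {r : ℝ | ∃ x, (¬ ∀ i, ⟪a i, x⟫ = b i) ∧
          r = Real.sqrt (∑ i, (⟪a i, x - P x⟫ / ‖a i‖) ^ 2) / ‖x - P x‖} / Real.sqrt m)
        (sInf {r : ℝ | ∃ x, (¬ ∀ i, ⟪a i, x⟫ = b i) ∧
          r = Real.sqrt (∑ i, (⟪a i, x - P x⟫) ^ 2) / ‖x - P x‖} /
            Real.sqrt (∑ i, ‖a i‖ ^ 2)))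
        (sInf {r : ℝ | ∃ x, (¬ ∀ i, ⟪a i, x⟫ = b i) ∧
          r = (⨆ i, |⟪a i, x - P x⟫|) / ‖x - P x‖} / (⨆ i, ‖a i‖))
      ≤ sInf {r : ℝ | ∃ x, (¬ ∀ i, ⟪a i, x⟫ = b i) ∧
          r = (⨆ i, |⟪a i, x - P x⟫| / ‖a i‖) / ‖x - P x‖} ∧
    sInf {r : ℝ | ∃ x, (¬ ∀ i, ⟪a i, x⟫ = b i) ∧
          r = (⨆ i, |⟪a i, x - P x⟫| / ‖a i‖) / ‖x - P x‖}
      ≤ sInf {r : ℝ | ∃ x, (¬ ∀ i, ⟪a i, x⟫ = b i) ∧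
          r = Real.sqrt (∑ i, (⟪a i, x - P x⟫ / ‖a i‖) ^ 2) / ‖x - P x‖} :=
  MD_hoffman_constant_sandwich_general a ha b P
end
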